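/- arXiv:math/0210035 — 5 statements merged into one kernel-verified Lean document; each statement's English description precedes it below -/
import Mathlib

section
/- If p1 is an elegant program (no shorter program has the same output), then any program p2 whose output is p1 itself satisfies |p2| ≥ |p1| − c, where c is a constant depending only on the universal computer and not on p1. -/
/-- Programs and outputs are finite bit strings. -/
abbrev Str := List Bool

/-- A computer is a partial computable function from bit strings to bit strings.
A universal computer can simulate any partial computable function via a fixed prefix. -/
def Univ (U : Str →. Str) : Prop :=
  Partrec U ∧ ∀ F : Str →. Str, Partrec F → ∃ e : Str, ∀ p : Str, U (e ++ p) = F p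

/-- A program `p` is elegant (for `U`) if it halts and no strictly shorter program
produces the same output. -/
def Elegant (U : Str →. Str) (p : Str) : Prop :=
  ∃ x : Str, x ∈ U p ∧ ∀ q : Str, q.length < p.length → x ∉ U q

/-- Kolmogorov complexity of `x` relative to `U`: the length of a shortest program for `x`. -/
noncomputable def Kc (U : Str →. Str) (x : Str) : ℕ :=
  sInf { n : ℕ | ∃ p : Str, p.length = n ∧ x ∈ U p }

/-- The domain of `U` is prefix-free. -/
def PrefixFreeDom (U : Str →. Str) : Prop :=
  ∀ p q : Str, (U p).Dom → (U q).Dom → p <+: q → p = q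

/-- A universal prefix-free machine. -/
def UnivPF (U : Str →. Str) : Prop :=
  Partrec U ∧ PrefixFreeDom U ∧
    ∀ F : Str →. Str, Partrec F → PrefixFreeDom F →
      ∃ e : Str, ∀ p : Str, U (e ++ p) = F p

open Classical in
/-- The halting probability `Ω = Σ_{U(p)↓} 2^(-|p|)`. -/
noncomputable def Omega (U : Str →. Str) : ℝ :=
  ∑' p : Str, if (U p).Dom then ((1 : ℝ) / 2) ^ p.length else 0

/-- The `n`-th bit (0-indexed) of the binary expansion of a real `α`. -/
noncomputable def nthBit (α : ℝ) (n : ℕ) : Bool :=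
  decide (⌊α * 2 ^ (n + 1)⌋ % 2 = 1)

/-- The string of the first `n` binary digits of `α`. -/
noncomputable def bitsOf (α : ℝ) (n : ℕ) : Str :=
  (List.range n).map (nthBit α)

/-- An injective encoding of a pair (string, number) as a bit string,
used to express the sentence `K(x) > n`. -/
def encPair (x : Str) (n : ℕ) : Str :=
  (x.flatMap fun b => [b, b]) ++ [true, false] ++ List.replicate n true

/-- An injective encoding of the sentence `the i-th bit of Ω is b`. -/
def encBit (i : ℕ) (b : Bool) : Str :=
  List.replicate i true ++ [false, b]

/-- A set of pairs is computably enumerable. -/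
def CE (S : Set (Str × ℕ)) : Prop :=
  ∃ f : ℕ → Option (Str × ℕ), Computable f ∧ S = { a | ∃ k, f k = some a }

/-- A set of strings is computably enumerable. -/
def CEStr (S : Set Str) : Prop :=
  ∃ f : ℕ → Option Str, Computable f ∧ S = { a | ∃ k, f k = some a }

/-- If `p1` is elegant, then any program `p2` whose output is `p1` itself satisfies
`|p2| ≥ |p1| − c` for a constant `c` depending only on the universal computer. -/
theorem stmt1 (U : Str →. Str) (hU : Univ U) :
    ∃ c : ℕ, ∀ p1 p2 : Str, Elegant U p1 → p1 ∈ U p2 → p1.length ≤ p2.length + c := by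
  obtain ⟨hP, hUniv⟩ := hU
  have hF : Partrec (fun p => (U p).bind fun y => U y) :=
    hP.bind (hP.comp Computable.snd)
  obtain ⟨e, he⟩ := hUniv _ hF
  refine ⟨e.length, fun p1 p2 hel hmem => ?_⟩
  obtain ⟨x, hx, hmin⟩ := hel
  have hx2 : x ∈ U (e ++ p2) := by
    rw [he p2]
    exact Part.mem_bind_iff.mpr ⟨p1, hmem, hx⟩
  by_contra h
  push_neg at h
  exact hmin (e ++ p2) (by simpa [List.length_append, Nat.add_comm] using h) hx2
end

section
/- There is a constant c (depending on the formal theory T and the universal machine) such that T cannot prove any true statement of the form 'K(x) > n' for n greater than the complexity of T plus c, provided T proves only true statements of this form. -/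
lemma Kc_le_length {U : Str →. Str} {x p : Str} (h : x ∈ U p) : Kc U x ≤ p.length :=
  Nat.sInf_le ⟨p, rfl, h⟩

section Computability

open Nat.Partrec (Code)

variable {α β : Type*} [Primcodable α] [Primcodable β]

theorem Primrec.list_replicate : Primrec₂ (List.replicate : ℕ → α → List α) :=
  (Primrec.list_map (Primrec.list_range.comp .fst) (Primrec.snd.comp .fst).to₂).to₂.of_eq
    fun n a => by simp

theorem Partrec.rePred_exists_mem_and {f : α →. β} {P : α × β → Prop} (hf : Partrec f)
    (hP : ComputablePred P) : REPred fun a => ∃ b ∈ f a, P (a, b) := by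
  obtain ⟨_, hP⟩ := hP
  have hg : Partrec₂ fun a b => bif decide (P (a, b)) then Part.some () else Part.none :=
    Partrec.cond hP (Partrec.const' _) Partrec.none
  refine (hf.bind hg).of_eq fun a => Part.ext fun u => ?_
  simp only [Part.mem_assert_iff, Part.mem_bind_iff, Bool.cond_decide, Part.mem_some_iff,
    exists_prop, and_true]
  refine exists_congr fun b => and_congr_right fun _ => ?_
  split_ifs with h <;> simp [h]

theorem REPred.exists_partrec_choice {R : α → β → Prop}
    (hR : REPred fun z : α × β => R z.1 z.2) :
    ∃ g : α →. β, Partrec g ∧ ∀ a, (∀ b ∈ g a, R a b) ∧ ((∃ b, R a b) → (g a).Dom) := by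
  obtain ⟨c, hc⟩ := Code.exists_code.1 hR
  have hc_dom : ∀ a b, (c.eval (Encodable.encode (a, b))).Dom ↔ R a b := by
    intro a b
    simp [hc, Encodable.encodek, Part.assert]
  -- dovetail over pairs (witness, number of evaluation steps)
  let search (a : α) (k : ℕ) : Option β :=
    (Encodable.decode (α := β × ℕ) k).bind fun q =>
      (Code.evaln q.2 c (Encodable.encode (a, q.1))).map fun _ => q.1
  have hsearch : Primrec₂ search :=
    Primrec.option_bind (Primrec.decode.comp .snd) <| Primrec.option_map
      (Code.primrec_evaln.comp <| .pair (.pair (Primrec.snd.comp .snd) (.const c))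
        (Primrec.encode.comp <| .pair (Primrec.fst.comp .fst) (Primrec.fst.comp .snd)))
      (Primrec.fst.comp <| Primrec.snd.comp .fst).to₂
  refine ⟨fun a => Nat.rfindOpt (search a), Partrec.rfindOpt hsearch.to_comp,
    fun a => ⟨?_, ?_⟩⟩
  · intro b hb
    obtain ⟨k, hk⟩ := Nat.rfindOpt_spec hb
    obtain ⟨⟨b', s⟩, -, hk⟩ := Option.bind_eq_some_iff.1 hk
    obtain ⟨y, hy, rfl⟩ := Option.map_eq_some_iff.1 hk
    exact (hc_dom a b').1 (Part.dom_iff_mem.2 ⟨y, Code.evaln_sound hy⟩)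
  · rintro ⟨b, hb⟩
    obtain ⟨y, hy⟩ := Part.dom_iff_mem.1 ((hc_dom a b).2 hb)
    obtain ⟨s, hs⟩ := Code.evaln_complete.1 hy
    refine Nat.rfindOpt_dom.2 ⟨Encodable.encode (b, s), b, ?_⟩
    simp only [search, Encodable.encodek, Option.bind_some, Option.mem_def.1 hs]
    rfl

end Computability

theorem encPair_primrec : Primrec₂ encPair := by
  have hdouble : Primrec fun x : Str => x.flatMap fun b => [b, b] :=
    Primrec.list_flatMap .id
      (Primrec.list_cons.comp .snd (Primrec.list_cons.comp .snd (.const []))).to₂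
  exact (Primrec.list_append.comp
    (Primrec.list_append.comp (hdouble.comp .fst) (.const [true, false]))
    (Primrec.list_replicate.comp .snd (.const true))).to₂

theorem exists_partrec_berry {U : Str →. Str} (hU : Partrec U) :
    ∃ B : Str →. Str, Partrec B ∧ ∀ (m : ℕ) (t : Str),
      (∀ x ∈ B (List.replicate m true ++ false :: t),
        ∃ n p, t.length + 2 * m ≤ n ∧ encPair x n ∈ U (t ++ p)) ∧
      ((∃ x n p, t.length + 2 * m ≤ n ∧ encPair x n ∈ U (t ++ p)) →
        (B (List.replicate m true ++ false :: t)).Dom) := by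
  let pad (s : Str) : ℕ := (s.takeWhile id).length
  let body (s : Str) : Str := (s.dropWhile id).tail
  have hpad : Primrec pad := Primrec.list_length.comp (Primrec.list_takeWhile .id)
  have hbody : Primrec body := Primrec.list_tail.comp (Primrec.list_dropWhile .id)
  have hR := Partrec.rePred_exists_mem_and
    (f := fun z : Str × (Str × ℕ) × Str => U (body z.1 ++ z.2.2))
    (P := fun w => (body w.1.1).length + 2 * pad w.1.1 ≤ w.1.2.1.2 ∧
      w.2 = encPair w.1.2.1.1 w.1.2.1.2)
    (hU.comp (Primrec.list_append.comp (hbody.comp .fst) (Primrec.snd.comp .snd)).to_comp)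
    (PrimrecPred.computablePred <| PrimrecPred.and
      (Primrec.nat_le.comp
        (Primrec.nat_add.comp
          (Primrec.list_length.comp (hbody.comp (Primrec.fst.comp .fst)))
          (Primrec.nat_mul.comp (.const 2) (hpad.comp (Primrec.fst.comp .fst))))
        (Primrec.snd.comp (Primrec.fst.comp (Primrec.snd.comp .fst))))
      (Primrec.eq.comp .snd
        (encPair_primrec.comp
          (Primrec.fst.comp (Primrec.fst.comp (Primrec.snd.comp .fst)))
          (Primrec.snd.comp (Primrec.fst.comp (Primrec.snd.comp .fst))))))
  obtain ⟨g, hg, hg_spec⟩ := REPred.exists_partrec_choice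
    (R := fun s (w : (Str × ℕ) × Str) => ∃ y ∈ U (body s ++ w.2),
      (body s).length + 2 * pad s ≤ w.1.2 ∧ y = encPair w.1.1 w.1.2) hR
  refine ⟨fun s => (g s).map (·.1.1),
    hg.map (Computable.fst.comp (Computable.fst.comp .snd)).to₂, fun m t => ?_⟩
  have hs : pad (List.replicate m true ++ false :: t) = m ∧
      body (List.replicate m true ++ false :: t) = t := by
    simp [pad, body]
  obtain ⟨hsound, hdom⟩ := hg_spec (List.replicate m true ++ false :: t)
  simp only [hs] at hsound hdom
  refine ⟨fun x hx => ?_, fun ⟨x, n, p, hn, hp⟩ => hdom ⟨((x, n), p), _, hp, hn, rfl⟩⟩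
  obtain ⟨⟨⟨x, n⟩, p⟩, hxnp, rfl⟩ := Part.mem_map_iff _ |>.1 hx
  obtain ⟨_, hy, hn, rfl⟩ := hsound _ hxnp
  exact ⟨n, p, hn, hy⟩

/-- The theory enumerated by `t` proves `K(x) > n` iff `encPair x n` is among the outputs
`U (t ++ p)`; its complexity is then at most `|t|`. -/
theorem stmt5 (U : Str →. Str) (hU : Univ U) :
    ∃ c : ℕ, ∀ t : Str,
      (∀ (x : Str) (n : ℕ), (∃ p : Str, encPair x n ∈ U (t ++ p)) → n < Kc U x) →
      ∀ (x : Str) (n : ℕ), (∃ p : Str, encPair x n ∈ U (t ++ p)) → n ≤ t.length + c := by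
  obtain ⟨B, hB, hB_spec⟩ := exists_partrec_berry hU.1
  obtain ⟨e, he⟩ := hU.2 B hB
  refine ⟨2 * e.length + 1, fun t hsound x n ⟨p, hp⟩ => ?_⟩
  by_contra! hn
  obtain ⟨hB_sound, hB_dom⟩ := hB_spec (e.length + 1) t
  obtain ⟨x', hx'⟩ := Part.dom_iff_mem.1 (hB_dom ⟨x, n, p, by omega, hp⟩)
  obtain ⟨n', p', hn', hp'⟩ := hB_sound x' hx'
  have hK := Kc_le_length (he _ ▸ hx')
  have hK' := hsound x' n' ⟨p', hp'⟩
  simp only [List.length_append, List.length_replicate, List.length_cons] at hK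
  omega
end

section
/- No sound, computably axiomatized formal theory T can prove that a program p is elegant if |p| exceeds the complexity of T plus a fixed constant c; hence T proves elegance for at most finitely many programs. -/
namespace Partrec

open Nat.Partrec Encodable

variable {α β σ : Type*} [Primcodable α] [Primcodable β] [Primcodable σ]

theorem exists_find {f : α → β →. σ} (hf : Partrec₂ f) {p : α → σ → Bool}
    (hp : Computable₂ p) :
    ∃ g : α →. σ, Partrec g ∧ (∀ a x, x ∈ g a → p a x ∧ ∃ b, x ∈ f a b) ∧
      ∀ a b x, x ∈ f a b → p a x → (g a).Dom := by
  obtain ⟨c, hc⟩ := Code.exists_code.1 hf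
  have eval_encode : ∀ a b, c.eval (encode (a, b)) = (f a b).map encode := by
    intro a b; simp [hc, encodek]
  -- Dovetailing: `k` codes a candidate `b` together with a step bound for running `f a b`.
  let step (a : α) (k : ℕ) : Option σ :=
    (decode (α := β) k.unpair.1).bind fun b =>
      (c.evaln k.unpair.2 (encode (a, b))).bind fun n =>
        (decode (α := σ) n).bind fun x => bif p a x then Option.some x else Option.none
  have step_computable : Computable₂ step := by
    open Computable in
    have run_evaln : Computable fun (y : (α × ℕ) × β) =>
        c.evaln y.1.2.unpair.2 (encode (y.1.1, y.2)) :=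
      (Code.primrec_evaln.comp
        (((Primrec.snd.comp (Primrec.unpair.comp (Primrec.snd.comp Primrec.fst))).pair
          (Primrec.const c)).pair
          (Primrec.encode.comp ((Primrec.fst.comp Primrec.fst).pair Primrec.snd)))).to_comp
    have accept : Computable₂ fun (y : ((α × ℕ) × β) × ℕ) (x : σ) =>
        bif p y.1.1.1 x then Option.some x else Option.none :=
      Computable.cond (hp.comp (fst.comp (fst.comp (fst.comp fst))) snd)
        (option_some.comp snd) (const Option.none)
    exact option_bind ((Computable.decode (α := β)).comp (fst.comp (Computable.unpair.comp snd)))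
      (option_bind run_evaln (option_bind ((Computable.decode (α := σ)).comp snd) accept))
  refine ⟨fun a => Nat.rfindOpt (step a), rfindOpt step_computable, ?_, ?_⟩
  · intro a x hx
    obtain ⟨k, hk⟩ := Nat.rfindOpt_spec hx
    simp only [step, Option.mem_def, Option.bind_eq_some_iff] at hk
    obtain ⟨b, -, n, hn, y, hy, hxy⟩ := hk
    have hn' := Code.evaln_sound (Option.mem_def.2 hn)
    rw [eval_encode] at hn'
    obtain ⟨z, hz, rfl⟩ := (Part.mem_map_iff _).1 hn'
    rw [encodek, Option.some_inj] at hy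
    subst hy
    cases hpy : p a z <;>
      simp only [hpy, cond_true, cond_false, reduceCtorEq, Option.some_inj] at hxy
    exact hxy ▸ ⟨hpy, b, hz⟩
  · intro a b x hx hpx
    obtain ⟨k, hk⟩ := Code.evaln_complete.1 (show encode x ∈ c.eval (encode (a, b)) by
      rw [eval_encode]; exact Part.mem_map _ hx)
    exact Nat.rfindOpt_dom.2 ⟨Nat.pair (encode b) k, x, by
      simp only [step, Nat.unpair_pair, encodek, Option.bind_some, Option.mem_def.1 hk, hpx]; rfl⟩

end Partrec

def berryInput (m : ℕ) (t : Str) : Str := List.replicate m true ++ false :: t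

def theoryOf (s : Str) : Str := s.drop (s.idxOf false + 1)

def berryBound (s : Str) : ℕ := s.length + s.idxOf false

lemma idxOf_false_berryInput (m : ℕ) (t : Str) : (berryInput m t).idxOf false = m := by
  induction m with
  | zero => simp [berryInput]
  | succ m ih =>
    rw [berryInput, List.replicate_succ, List.cons_append, List.idxOf_cons_ne _ (by decide)]
    exact congrArg Nat.succ ih

lemma theoryOf_berryInput (m : ℕ) (t : Str) : theoryOf (berryInput m t) = t := by
  rw [theoryOf, idxOf_false_berryInput, berryInput, List.drop_append]
  simp

lemma berryBound_berryInput (m : ℕ) (t : Str) :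
    berryBound (berryInput m t) = t.length + (2 * m + 1) := by
  rw [berryBound, idxOf_false_berryInput]
  simp only [berryInput, List.length_append, List.length_replicate, List.length_cons]
  omega

lemma primrec_theoryOf : Primrec theoryOf :=
  Primrec.list_drop.comp (Primrec.succ.comp (Primrec.list_idxOf.comp (Primrec.const false)
    Primrec.id)) Primrec.id

lemma primrec_berryBound : Primrec berryBound :=
  Primrec.nat_add.comp Primrec.list_length
    (Primrec.list_idxOf.comp (Primrec.const false) Primrec.id)

lemma exists_berry_machine {U : Str →. Str} (hU : Partrec U) :
    ∃ B : Str →. Str, Partrec B ∧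
      ∀ s, (∃ p q, p ∈ U (theoryOf s ++ q) ∧ berryBound s < p.length) →
      ∃ p, (∃ q, p ∈ U (theoryOf s ++ q)) ∧ berryBound s < p.length ∧ B s = U p := by
  obtain ⟨find, hfind, find_spec, find_dom⟩ :=
    Partrec.exists_find (f := fun s q => U (theoryOf s ++ q))
      (hU.comp (Primrec.list_append.comp (primrec_theoryOf.comp Primrec.fst) Primrec.snd).to_comp)
      (p := fun s p => decide (berryBound s < p.length))
      (Primrec.nat_lt.comp (primrec_berryBound.comp Primrec.fst)
        (Primrec.list_length.comp Primrec.snd)).decide.to_comp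
  refine ⟨fun s => (find s).bind fun p => U p, hfind.bind (hU.comp Computable.snd), ?_⟩
  rintro s ⟨p, q, hp, hlong⟩
  obtain ⟨p', hp'⟩ := Part.dom_iff_mem.1 (find_dom s q p hp (decide_eq_true hlong))
  obtain ⟨hlong', q', hq'⟩ := find_spec s p' hp'
  exact ⟨p', ⟨q', hq'⟩, of_decide_eq_true hlong', by
    change (find s).bind (fun p => U p) = U p'
    rw [Part.eq_some_iff.2 hp', Part.bind_some]⟩

lemma length_le_of_forall_elegant {U : Str →. Str} (hU : Univ U) :
    ∃ c : ℕ, ∀ t : Str, (∀ p : Str, (∃ q : Str, p ∈ U (t ++ q)) → Elegant U p) →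
      ∀ p : Str, (∃ q : Str, p ∈ U (t ++ q)) → p.length ≤ t.length + c := by
  obtain ⟨B, hB, hB_spec⟩ := exists_berry_machine hU.1
  obtain ⟨e, he⟩ := hU.2 B hB
  refine ⟨2 * e.length + 1, fun t sound p ⟨q, hp⟩ => ?_⟩
  by_contra! hlong
  set s := berryInput e.length t
  obtain ⟨p', ⟨q', hp'⟩, hlong', hBp'⟩ := hB_spec s
    ⟨p, q, by rwa [theoryOf_berryInput], by rwa [berryBound_berryInput]⟩
  rw [theoryOf_berryInput] at hp'
  obtain ⟨x, hx, hmin⟩ := sound p' ⟨q', hp'⟩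
  have hlen : (e ++ s).length = berryBound s := by
    rw [berryBound, idxOf_false_berryInput, List.length_append, Nat.add_comm]
  exact hmin (e ++ s) (hlen ▸ hlong') (by rw [he, hBp']; exact hx)

-- The theory enumerated by `t` proves "`p` is elegant" iff `p` is an output `U (t ++ q)`.
/-- No sound theory `T` (theorems enumerated by a program `t`) can prove that a program
`p` is elegant when `|p| > |t| + c`; hence `T` proves elegance of only finitely many
programs.  `T` proves `p` elegant iff `p` appears among the outputs `U (t ++ q)`. -/
theorem stmt6 (U : Str →. Str) (hU : Univ U) :
    ∃ c : ℕ, ∀ t : Str,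
      (∀ p : Str, (∃ q : Str, p ∈ U (t ++ q)) → Elegant U p) →
      (∀ p : Str, (∃ q : Str, p ∈ U (t ++ q)) → p.length ≤ t.length + c) ∧
        { p : Str | ∃ q : Str, p ∈ U (t ++ q) }.Finite := by
  obtain ⟨c, hc⟩ := length_le_of_forall_elegant hU
  exact ⟨c, fun t sound => ⟨hc t sound, (List.finite_length_le Bool _).subset (hc t sound)⟩⟩
end

section
/- No single computably enumerable set of true sentences (theory of finite complexity) contains, for every elegant program p, the sentence asserting p's elegance; consequently, the set of true elegance assertions is not computably enumerable. -/
/-!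
Every output has a shortest, hence elegant, program, and programs of length at most `N` have
finitely many outputs; so if `U` has infinitely many outputs, elegant programs are arbitrarily
long. On the other hand, if a c.e. set `S` of elegant programs contained arbitrarily long ones,
let `e` be the `U`-code of "on input `q`, find the first enumerated `r ∈ S` with `|r| > 2|q|`
and run `r`". On an input `q` of length `|e|`, the program `e ++ q` outputs `U r` and is shorter
than `r`, contradicting the elegance of `r`.
-/

theorem finite_setOf_mem_of_length_le (U : Str →. Str) (N : ℕ) :
    { x : Str | ∃ p : Str, p.length ≤ N ∧ x ∈ U p }.Finite := by
  have hsub : { x : Str | ∃ p : Str, p.length ≤ N ∧ x ∈ U p } ⊆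
      ⋃ p ∈ { p : Str | p.length ≤ N }, { x | x ∈ U p } := by
    rintro x ⟨p, hp, hx⟩
    exact Set.mem_biUnion hp hx
  refine (List.finite_length_le Bool N).biUnion (fun p _ => ?_) |>.subset hsub
  exact Set.Subsingleton.finite fun _ ha _ hb => Part.mem_unique ha hb

theorem exists_elegant_of_mem {U : Str →. Str} {x p : Str} (hx : x ∈ U p) :
    ∃ q : Str, Elegant U q ∧ x ∈ U q := by
  classical
  have hex : ∃ n, ∃ q : Str, q.length = n ∧ x ∈ U q := ⟨p.length, p, rfl, hx⟩
  obtain ⟨q, hqlen, hxq⟩ := Nat.find_spec hex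
  refine ⟨q, ⟨x, hxq, fun q' hlt hxq' => ?_⟩, hxq⟩
  exact Nat.find_min hex (hqlen ▸ hlt) ⟨q', rfl, hxq'⟩

theorem exists_elegant_length_gt {U : Str →. Str}
    (hinf : { x : Str | ∃ p : Str, x ∈ U p }.Infinite) (N : ℕ) :
    ∃ p : Str, Elegant U p ∧ N < p.length := by
  obtain ⟨x, ⟨p, hxp⟩, hshort⟩ := (hinf.sdiff (finite_setOf_mem_of_length_le U N)).nonempty
  obtain ⟨q, hq, hxq⟩ := exists_elegant_of_mem hxp
  exact ⟨q, hq, lt_of_not_ge fun hle => hshort ⟨q, hle, hxq⟩⟩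

theorem CEStr.exists_partrec_search {S : Set Str} (hS : CEStr S) {bound : Str → ℕ}
    (hbound : Computable bound) (hunb : ∀ n, ∃ r ∈ S, n < r.length) :
    ∃ F : Str →. Str, Partrec F ∧ ∀ p, ∃ r ∈ F p, r ∈ S ∧ bound p < r.length := by
  obtain ⟨f, hf, rfl⟩ := hS
  let g : Str → ℕ → Option Str := fun p k =>
    (f k).bind fun r => if bound p < r.length then some r else none
  have hg : Computable₂ g := by
    refine (hf.comp Computable.snd).option_bind ?_
    have hlt : Computable fun a : (Str × ℕ) × Str => decide (bound a.1.1 < a.2.length) :=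
      Primrec.nat_lt.decide.to_comp.comp (hbound.comp (Computable.fst.comp Computable.fst))
        (Computable.list_length.comp Computable.snd)
    exact (Computable.cond hlt (Computable.option_some.comp Computable.snd)
      (Computable.const none)).of_eq fun _ => Bool.cond_decide _ _ _
  have hg_spec {p r : Str} {k : ℕ} (h : r ∈ g p k) : f k = some r ∧ bound p < r.length := by
    simp only [g, Option.mem_def, Option.bind_eq_some_iff] at h
    obtain ⟨r', hfk, hr'⟩ := h
    split_ifs at hr' with hlt
    cases hr'
    exact ⟨hfk, hlt⟩
  refine ⟨fun p => Nat.rfindOpt (g p), Partrec.rfindOpt hg, fun p => ?_⟩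
  have hdom : (Nat.rfindOpt (g p)).Dom := by
    rw [Nat.rfindOpt_dom]
    obtain ⟨r, ⟨k, hk⟩, hlt⟩ := hunb (bound p)
    exact ⟨k, r, by simp [g, hk, hlt]⟩
  obtain ⟨r, hr⟩ := Part.dom_iff_mem.1 hdom
  obtain ⟨k, hk⟩ := Nat.rfindOpt_spec hr
  obtain ⟨hfk, hlt⟩ := hg_spec hk
  exact ⟨r, hr, ⟨k, hfk⟩, hlt⟩

theorem Univ.exists_length_bound_of_subset_elegant {U : Str →. Str} (hU : Univ U) {S : Set Str}
    (hS : CEStr S) (hsub : S ⊆ { p : Str | Elegant U p }) :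
    ∃ N : ℕ, ∀ p ∈ S, p.length ≤ N := by
  by_contra! hunb
  obtain ⟨F, hF, hFspec⟩ :=
    hS.exists_partrec_search (bound := fun p => 2 * p.length)
      (Primrec.nat_mul.comp (Primrec.const 2) Primrec.list_length).to_comp hunb
  obtain ⟨e, he⟩ := hU.2 (fun p => (F p).bind U) (hF.bind (hU.1.comp Computable.snd))
  let q : Str := List.replicate e.length true
  obtain ⟨r, hrF, hrS, hlt⟩ := hFspec q
  obtain ⟨x, hxr, hmin⟩ := hsub hrS
  refine hmin (e ++ q) ?_ (he q ▸ Part.mem_bind hrF hxr)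
  simp only [q, List.length_append, List.length_replicate] at hlt ⊢
  omega

/-- No c.e. set of true elegance assertions contains all of them; consequently the set
of elegant programs is not computably enumerable (assuming `U` has infinitely many
distinct outputs). -/
theorem stmt8 (U : Str →. Str) (hU : Univ U)
    (hinf : { x : Str | ∃ p : Str, x ∈ U p }.Infinite) :
    (∀ S : Set Str, CEStr S → S ⊆ { p : Str | Elegant U p } →
      ∃ p : Str, Elegant U p ∧ p ∉ S) ∧
    ¬ CEStr { p : Str | Elegant U p } := by
  have incomplete : ∀ S : Set Str, CEStr S → S ⊆ { p : Str | Elegant U p } →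
      ∃ p : Str, Elegant U p ∧ p ∉ S := by
    intro S hS hsub
    obtain ⟨N, hN⟩ := hU.exists_length_bound_of_subset_elegant hS hsub
    obtain ⟨p, hp, hlt⟩ := exists_elegant_length_gt hinf N
    exact ⟨p, hp, fun hpS => (hN p hpS).not_gt hlt⟩
  refine ⟨incomplete, fun hCE => ?_⟩
  obtain ⟨p, hp, hpS⟩ := incomplete _ hCE subset_rfl
  exact hpS hp
end

section
/- Ω is an incomputable real number: there is no algorithm that, given n, outputs the n-th bit of the binary expansion of Ω. -/
/-!
If the bits of `Ω` were computable, so would be `⌊Ω * 2 ^ m⌋` for every `m`. By Kraft's inequality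
the weights `2 ^ (-|q|)` of the halting programs sum to `Ω`, so if we enumerate the halting programs
in stages, the stage sums eventually exceed `(⌊Ω * 2 ^ m⌋ - 1) / 2 ^ m`, with `m = |p| + 1` for a
given program `p`. If `p` has not halted by such a stage it never halts: its weight
`2 ^ (-|p|) = 2 / 2 ^ m` would push the sum past `Ω`. So the halting set of `U` would be decidable.
But `U` simulates the prefix-free machine that on input `1ⁿ0` runs the `n`-th partial recursive
function on `0`, and the halting problem would become decidable.
-/

open InformationTheory in
theorem uniquelyDecodable_of_prefix_eq {α : Type*} {S : Set (List α)}
    (hS : ∀ p ∈ S, ∀ q ∈ S, p <+: q → p = q) (hnil : [] ∉ S) : UniquelyDecodable S := by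
  intro L₁
  induction L₁ with
  | nil =>
    rintro (_ | ⟨v, L₂⟩) - h₂ h
    · rfl
    · obtain ⟨rfl, -⟩ := List.append_eq_nil_iff.1 h.symm
      exact absurd (h₂ [] (by simp)) hnil
  | cons w L₁ ih =>
    rintro (_ | ⟨v, L₂⟩) h₁ h₂ h
    · obtain ⟨rfl, -⟩ := List.append_eq_nil_iff.1 h
      exact absurd (h₁ [] (by simp)) hnil
    · have hw := h₁ w (by simp)
      have hv := h₂ v (by simp)
      simp only [List.flatten_cons] at h
      obtain rfl : w = v := by
        rcases List.prefix_or_prefix_of_prefix (List.prefix_append w _)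
          (h ▸ List.prefix_append v _) with hp | hp
        · exact hS w hw v hv hp
        · exact (hS v hv w hw hp).symm
      rw [ih L₂ (fun x hx => h₁ x (by simp [hx])) (fun x hx => h₂ x (by simp [hx]))
        (List.append_cancel_left h)]

theorem sum_half_pow_length_le_one {S : Finset Str} (hS : ∀ p ∈ S, ∀ q ∈ S, p <+: q → p = q) :
    ∑ p ∈ S, (1 / 2 : ℝ) ^ p.length ≤ 1 := by
  by_cases hnil : [] ∈ S
  · obtain rfl : S = {[]} := Finset.eq_singleton_iff_unique_mem.2
      ⟨hnil, fun p hp => (hS [] hnil p hp List.nil_prefix).symm⟩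
    simp
  · simpa using InformationTheory.kraft_mcmillan_inequality
      (uniquelyDecodable_of_prefix_eq (S := (S : Set Str)) hS hnil)

section Omega

open Classical

variable {U : Str →. Str}

noncomputable def haltingWeight (U : Str →. Str) (p : Str) : ℝ :=
  if (U p).Dom then (1 / 2) ^ p.length else 0

theorem omega_eq_tsum_haltingWeight (U : Str →. Str) : Omega U = ∑' p, haltingWeight U p := rfl

theorem haltingWeight_nonneg (U : Str →. Str) (p : Str) : 0 ≤ haltingWeight U p := by
  unfold haltingWeight; split <;> positivity

theorem sum_haltingWeight (U : Str →. Str) (F : Finset Str) :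
    ∑ p ∈ F, haltingWeight U p = ∑ p ∈ F.filter (fun p => (U p).Dom), (1 / 2 : ℝ) ^ p.length := by
  rw [Finset.sum_filter]
  rfl

theorem summable_haltingWeight (hpf : PrefixFreeDom U) : Summable (haltingWeight U) :=
  summable_of_sum_le (haltingWeight_nonneg U) fun F => by
    rw [sum_haltingWeight]
    exact sum_half_pow_length_le_one fun p hp q hq =>
      hpf p q (Finset.mem_filter.1 hp).2 (Finset.mem_filter.1 hq).2

theorem omega_nonneg (U : Str →. Str) : 0 ≤ Omega U := by
  rw [omega_eq_tsum_haltingWeight]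
  exact tsum_nonneg (haltingWeight_nonneg U)

theorem sum_le_omega (hpf : PrefixFreeDom U) {F : Finset Str} (hF : ∀ p ∈ F, (U p).Dom) :
    ∑ p ∈ F, (1 / 2 : ℝ) ^ p.length ≤ Omega U := by
  calc ∑ p ∈ F, (1 / 2 : ℝ) ^ p.length = ∑ p ∈ F, haltingWeight U p := by
        rw [sum_haltingWeight, Finset.filter_true_of_mem hF]
    _ ≤ Omega U := by
        rw [omega_eq_tsum_haltingWeight]
        exact (summable_haltingWeight hpf).sum_le_tsum F fun p _ => haltingWeight_nonneg U p

theorem exists_finset_lt_sum (hpf : PrefixFreeDom U) {δ : ℝ} (hδ : δ < Omega U) :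
    ∃ F : Finset Str, (∀ p ∈ F, (U p).Dom) ∧ δ < ∑ p ∈ F, (1 / 2 : ℝ) ^ p.length := by
  rw [omega_eq_tsum_haltingWeight] at hδ
  obtain ⟨F, hF⟩ := ((summable_haltingWeight hpf).hasSum.eventually_const_lt hδ).exists
  rw [sum_haltingWeight] at hF
  exact ⟨_, fun p hp => (Finset.mem_filter.1 hp).2, hF⟩

end Omega

theorem floor_mul_two_pow_succ {x : ℝ} (hx : 0 ≤ x) (n : ℕ) :
    ⌊x * 2 ^ (n + 1)⌋₊ = 2 * ⌊x * 2 ^ n⌋₊ + (nthBit x n).toNat := by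
  have hhalf : ⌊x * 2 ^ n⌋₊ = ⌊x * 2 ^ (n + 1)⌋₊ / 2 := by
    rw [← Nat.floor_div_ofNat, pow_succ, ← mul_assoc, mul_div_cancel_right₀ _ two_ne_zero]
  have hbit : nthBit x n = decide (⌊x * 2 ^ (n + 1)⌋₊ % 2 = 1) := by
    rw [nthBit, ← Int.natCast_floor_eq_floor (by positivity), decide_eq_decide]
    omega
  rw [hhalf, hbit]
  rcases Nat.mod_two_eq_zero_or_one ⌊x * 2 ^ (n + 1)⌋₊ with h | h <;> simp [h] <;> omega

theorem computable_floor_mul_two_pow {x : ℝ} (hx : 0 ≤ x) {f : ℕ → Bool} (hf : Computable f)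
    (hbits : ∀ n, f n = nthBit x n) : Computable fun n => ⌊x * 2 ^ n⌋₊ := by
  have hstep : Computable₂ fun (_ : ℕ) (q : ℕ × ℕ) => 2 * q.2 + (f q.1).toNat :=
    (Primrec.nat_add.to_comp.comp
      (Primrec.nat_mul.to_comp.comp (Computable.const 2) (Computable.snd.comp Computable.snd))
      (Computable.cond (hf.comp (Computable.fst.comp Computable.snd)) (Computable.const 1)
        (Computable.const 0))).to₂
  refine (Computable.nat_rec Computable.id (Computable.const ⌊x⌋₊) hstep).of_eq fun n => ?_
  induction n with
  | zero => simp
  | succ n ih => simp only [id] at ih ⊢; rw [ih, floor_mul_two_pow_succ hx, hbits]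

theorem not_dom_iff_exists_finset {U : Str →. Str} (hpf : PrefixFreeDom U) (p : Str) :
    ¬(U p).Dom ↔ ∃ F : Finset Str, (∀ q ∈ F, (U q).Dom) ∧ p ∉ F ∧
      (⌊Omega U * 2 ^ (p.length + 1)⌋₊ : ℝ) ≤
        2 ^ (p.length + 1) * ∑ q ∈ F, (1 / 2 : ℝ) ^ q.length + 1 := by
  set m := p.length + 1
  have hm : (0 : ℝ) < 2 ^ m := by positivity
  constructor
  · intro hp
    have hδ : ((⌊Omega U * 2 ^ m⌋₊ : ℝ) - 1) / 2 ^ m < Omega U := by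
      rw [div_lt_iff₀ hm]
      linarith [Nat.floor_le (mul_nonneg (omega_nonneg U) hm.le)]
    obtain ⟨F, hF, hδF⟩ := exists_finset_lt_sum hpf hδ
    rw [div_lt_iff₀ hm] at hδF
    exact ⟨F, hF, fun hpF => hp (hF p hpF), by linarith⟩
  · rintro ⟨F, hF, hpF, hle⟩ hp
    have hins := sum_le_omega hpf (F := insert p F) (Finset.forall_mem_insert _ _ _ |>.2 ⟨hp, hF⟩)
    rw [Finset.sum_insert hpF] at hins
    have hp2 : 2 ^ m * (1 / 2 : ℝ) ^ p.length = 2 := by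
      rw [pow_succ, one_div_pow, mul_comm (2 ^ p.length : ℝ), mul_assoc,
        mul_one_div_cancel (by positivity), mul_one]
    have hscaled := mul_le_mul_of_nonneg_left hins hm.le
    rw [mul_add, hp2] at hscaled
    linarith [Nat.lt_floor_add_one (Omega U * 2 ^ m)]

theorem Partrec.exists_dom_approx {α β : Type*} [Primcodable α] [Primcodable β] {f : α →. β}
    (hf : Partrec f) : ∃ h : α → ℕ → Bool, Primrec₂ h ∧
      (∀ a s t, s ≤ t → h a s → h a t) ∧ ∀ a, (f a).Dom ↔ ∃ t, h a t := by
  obtain ⟨c, hc⟩ := Nat.Partrec.Code.exists_code.1 hf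
  have heval : ∀ a, c.eval (Encodable.encode a) = (f a).map Encodable.encode := by
    simp [hc, Encodable.encodek]
  refine ⟨fun a t => (Nat.Partrec.Code.evaln t c (Encodable.encode a)).isSome, ?_, ?_, ?_⟩
  · exact (Primrec.option_isSome.comp (Nat.Partrec.Code.primrec_evaln.comp
      ((Primrec.snd.pair (Primrec.const c)).pair (Primrec.encode.comp Primrec.fst)))).to₂
  · intro a s t hst hs
    obtain ⟨x, hx⟩ := Option.isSome_iff_exists.1 hs
    exact Option.isSome_iff_exists.2 ⟨x, Nat.Partrec.Code.evaln_mono hst hx⟩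
  · intro a
    have hdom : (f a).Dom ↔ (c.eval (Encodable.encode a)).Dom := by rw [heval]; rfl
    rw [hdom, Part.dom_iff_mem]
    simp only [Nat.Partrec.Code.evaln_complete, Option.isSome_iff_exists, Option.mem_def]
    exact exists_comm

section Stage

variable (halts : Str → ℕ → Bool)

/-- The bound `q.length ≤ t` makes `2 ^ t * 2 ^ (-|q|)` a natural number (see `stageWeight_eq`). -/
def stage (t : ℕ) : List Str :=
  ((List.range t).filterMap (Encodable.decode₂ Str)).filter
    fun q => halts q t && decide (q.length ≤ t)

def stageWeight (t : ℕ) : ℕ :=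
  ((stage halts t).map fun q => 2 ^ (t - q.length)).sum

variable {halts}

theorem mem_stage {t : ℕ} {q : Str} :
    q ∈ stage halts t ↔ Encodable.encode q < t ∧ halts q t ∧ q.length ≤ t := by
  simp [stage, Encodable.decode₂_eq_some]

theorem nodup_stage (t : ℕ) : (stage halts t).Nodup :=
  (List.nodup_range.filterMap fun _ _ _ h₁ h₂ =>
    (Encodable.mem_decode₂.1 h₁).symm.trans (Encodable.mem_decode₂.1 h₂)).filter _

theorem stageWeight_eq (t : ℕ) :
    (stageWeight halts t : ℝ) = 2 ^ t * ∑ q ∈ (stage halts t).toFinset, (1 / 2 : ℝ) ^ q.length := by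
  rw [List.sum_toFinset _ (nodup_stage t), ← List.sum_map_mul_left, stageWeight, Nat.cast_list_sum,
    List.map_map]
  congr 1
  refine List.map_congr_left fun q hq => ?_
  simp only [Function.comp_apply, Nat.cast_pow, Nat.cast_ofNat, one_div, inv_pow]
  rw [pow_sub₀ _ two_ne_zero (mem_stage.1 hq).2.2]

theorem exists_stage_superset (hmono : ∀ q s t, s ≤ t → halts q s → halts q t)
    {F : Finset Str} (hF : ∀ q ∈ F, ∃ s, halts q s) : ∃ t, ∀ q ∈ F, q ∈ stage halts t := by
  refine ((Filter.eventually_all_finset F (l := Filter.atTop (α := ℕ))).2 fun q hq => ?_).exists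
  obtain ⟨s, hs⟩ := hF q hq
  filter_upwards [Filter.eventually_ge_atTop s, Filter.eventually_gt_atTop (Encodable.encode q),
    Filter.eventually_ge_atTop q.length] with t hst hqt hlt
  exact mem_stage.2 ⟨hqt, hmono q s t hst hs, hlt⟩

theorem not_dom_iff_exists_stage {U : Str →. Str} (hpf : PrefixFreeDom U)
    (hmono : ∀ q s t, s ≤ t → halts q s → halts q t) (hdom : ∀ q, (U q).Dom ↔ ∃ t, halts q t)
    (p : Str) :
    ¬(U p).Dom ↔ ∃ t, p ∉ stage halts t ∧ ⌊Omega U * 2 ^ (p.length + 1)⌋₊ * 2 ^ t ≤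
      2 ^ (p.length + 1) * stageWeight halts t + 2 ^ t := by
  have hsound : ∀ t, ∀ q ∈ stage halts t, (U q).Dom := fun t q hq =>
    (hdom q).2 ⟨t, (mem_stage.1 hq).2.1⟩
  have hweight : ∀ t, ⌊Omega U * 2 ^ (p.length + 1)⌋₊ * 2 ^ t ≤
      2 ^ (p.length + 1) * stageWeight halts t + 2 ^ t ↔ (⌊Omega U * 2 ^ (p.length + 1)⌋₊ : ℝ) ≤
        2 ^ (p.length + 1) * ∑ q ∈ (stage halts t).toFinset, (1 / 2 : ℝ) ^ q.length + 1 := by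
    intro t
    rw [← Nat.cast_le (α := ℝ)]
    push_cast
    rw [stageWeight_eq, mul_left_comm, ← mul_add_one, mul_comm _ ((2 : ℝ) ^ t)]
    exact mul_le_mul_iff_of_pos_left (by positivity)
  constructor
  · intro hp
    obtain ⟨F, hF, -, hle⟩ := (not_dom_iff_exists_finset hpf p).1 hp
    obtain ⟨t, ht⟩ := exists_stage_superset hmono fun q hq => (hdom q).1 (hF q hq)
    refine ⟨t, fun hpt => hp (hsound t p hpt), (hweight t).2 (hle.trans ?_)⟩
    gcongr
    exact fun q hq => List.mem_toFinset.2 (ht q hq)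
  · rintro ⟨t, hpt, hle⟩
    exact (not_dom_iff_exists_finset hpf p).2 ⟨_, fun q hq => hsound t q (List.mem_toFinset.1 hq),
      by simpa using hpt, (hweight t).1 hle⟩

theorem primrec_two_pow : Primrec fun n : ℕ => 2 ^ n :=
  (Primrec₂.unpaired'.1 Nat.Primrec.pow).comp (Primrec.const 2) Primrec.id

theorem Primrec.nat_list_sum : Primrec (List.sum : List ℕ → ℕ) :=
  (Primrec.list_foldr Primrec.id (Primrec.const 0)
    (Primrec.nat_add.comp (Primrec.fst.comp Primrec.snd) (Primrec.snd.comp Primrec.snd)).to₂).of_eq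
    fun _ => rfl

theorem primrec_stage (hhalts : Primrec₂ halts) : Primrec (stage halts) := by
  have hR : PrimrecRel fun (q : Str) (t : ℕ) => halts q t = true ∧ q.length ≤ t :=
    PrimrecPred.and (Primrec.eq.comp hhalts (Primrec.const true))
      (Primrec.nat_le.comp (Primrec.list_length.comp Primrec.fst) Primrec.snd)
  exact (hR.listFilter.comp (Primrec.listFilterMap Primrec.list_range
    (Primrec.decode₂.comp Primrec.snd).to₂) Primrec.id).of_eq fun t => by simp [stage]

theorem primrec_stageWeight (hhalts : Primrec₂ halts) : Primrec (stageWeight halts) :=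
  Primrec.nat_list_sum.comp (Primrec.list_map (primrec_stage hhalts)
    (primrec_two_pow.comp
      (Primrec.nat_sub.comp Primrec.fst (Primrec.list_length.comp Primrec.snd))).to₂)

end Stage

theorem REPred.exists_of_computable₂ {α : Type*} [Primcodable α] {b : α → ℕ → Bool}
    (hb : Computable₂ b) : REPred fun a => ∃ n, b a n = true :=
  (Partrec.rfind hb.partrec₂).dom_re.of_eq fun a => by simp [Nat.rfind_dom]

theorem computablePred_dom_of_computable_nthBit {U : Str →. Str} (hU : Partrec U)
    (hpf : PrefixFreeDom U) {f : ℕ → Bool} (hf : Computable f)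
    (hbits : ∀ n, f n = nthBit (Omega U) n) : ComputablePred fun p => (U p).Dom := by
  obtain ⟨halts, hhalts, hmono, hdom⟩ := hU.exists_dom_approx
  have hfloor := computable_floor_mul_two_pow (omega_nonneg U) hf hbits
  have hmem : Primrec₂ fun p t => decide (p ∈ stage halts t) :=
    ((PrimrecRel.exists_mem_list Primrec.eq).decide.comp₂
      (Primrec.comp₂ (primrec_stage hhalts) Primrec₂.right) Primrec₂.left).of_eq fun p t => by simp
  have hlen : Primrec fun x : Str × ℕ => x.1.length + 1 :=
    Primrec.succ.comp (Primrec.list_length.comp Primrec.fst)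
  have hle : Computable₂ fun (p : Str) (t : ℕ) =>
      decide (⌊Omega U * 2 ^ (p.length + 1)⌋₊ * 2 ^ t ≤
        2 ^ (p.length + 1) * stageWeight halts t + 2 ^ t) :=
    Primrec.nat_le.decide.to_comp.comp
      (Primrec.nat_mul.to_comp.comp (hfloor.comp hlen.to_comp)
        (primrec_two_pow.comp Primrec.snd).to_comp)
      (Primrec.nat_add.comp
        (Primrec.nat_mul.comp (primrec_two_pow.comp hlen)
          ((primrec_stageWeight hhalts).comp Primrec.snd))
        (primrec_two_pow.comp Primrec.snd)).to_comp
  have hcert := Primrec.and.to_comp.comp₂ (Primrec.not.to_comp.comp₂ hmem.to_comp) hle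
  refine ComputablePred.computable_iff_re_compl_re'.2
    ⟨hU.dom_re, (REPred.exists_of_computable₂ hcert).of_eq fun p => ?_⟩
  rw [not_dom_iff_exists_stage hpf hmono hdom]
  simp

def unary (n : ℕ) : Str := List.replicate n true ++ [false]

theorem length_unary (n : ℕ) : (unary n).length = n + 1 := by simp [unary]

theorem eq_of_unary_prefix {m n : ℕ} (h : unary m <+: unary n) : m = n := by
  induction m generalizing n with
  | zero => cases n <;> simp_all [unary, List.replicate_succ]
  | succ m ih =>
    cases n with
    | zero => simp [unary, List.replicate_succ] at h
    | succ n => simpa using ih (by simpa [unary, List.replicate_succ] using h)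

def ofUnary (p : Str) : Option ℕ :=
  if p = unary (p.length - 1) then some (p.length - 1) else none

theorem ofUnary_unary (n : ℕ) : ofUnary (unary n) = some n := by
  simp [ofUnary, length_unary]

theorem eq_unary_of_ofUnary_eq_some {p : Str} {n : ℕ} (h : ofUnary p = some n) : p = unary n := by
  unfold ofUnary at h
  split_ifs at h with hp
  rwa [← Option.some_inj.1 h]

theorem primrec_unary : Primrec unary :=
  (Primrec.list_append.comp (Primrec.list_map Primrec.list_range (Primrec.const true).to₂)
    (Primrec.const [false])).of_eq fun n => by simp [unary, List.map_const']

theorem primrec_ofUnary : Primrec ofUnary := by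
  have hpred : Primrec fun p : Str => p.length - 1 :=
    Primrec.nat_sub.comp Primrec.list_length (Primrec.const 1)
  exact Primrec.ite (Primrec.eq.comp Primrec.id (primrec_unary.comp hpred))
    (Primrec.option_some.comp hpred) (Primrec.const none)

open Nat.Partrec (Code) in
theorem UnivPF.not_computablePred_dom {U : Str →. Str} (hU : UnivPF U) :
    ¬ComputablePred fun p => (U p).Dom := by
  obtain ⟨-, -, huniv⟩ := hU
  let F : Str →. Str := fun p =>
    (ofUnary p : Part ℕ).bind fun n => (Code.eval (Denumerable.ofNat Code n) 0).map fun _ => []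
  have hF : Partrec F :=
    (Computable.ofOption primrec_ofUnary.to_comp).bind
      ((Code.eval_part.comp ((Primrec.ofNat Code).to_comp.comp Computable.snd)
        (Computable.const 0)).map (Computable.const []).to₂).to₂
  have hFdom : ∀ p, (F p).Dom → ∃ n, p = unary n := fun p hp => by
    cases hn : ofUnary p with
    | none => simp [F, hn] at hp
    | some n => exact ⟨n, eq_unary_of_ofUnary_eq_some hn⟩
  have hFpf : PrefixFreeDom F := by
    intro p q hp hq hpq
    obtain ⟨m, rfl⟩ := hFdom p hp
    obtain ⟨n, rfl⟩ := hFdom q hq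
    rw [eq_of_unary_prefix hpq]
  have hFunary : ∀ c : Code, (F (unary (Encodable.encode c))).Dom ↔ (c.eval 0).Dom := fun c => by
    simp [F, ofUnary_unary]
  obtain ⟨e, he⟩ := huniv F hF hFpf
  intro hdec
  obtain ⟨g, hg, hgdom⟩ := ComputablePred.computable_iff.1 hdec
  refine ComputablePred.halting_problem 0 (ComputablePred.computable_iff.2
    ⟨fun c => g (e ++ unary (Encodable.encode c)), hg.comp ?_, funext fun c => ?_⟩)
  · exact (Primrec.list_append.comp (Primrec.const e)
      (primrec_unary.comp Primrec.encode)).to_comp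
  · rw [← hFunary, ← he]
    exact congrFun hgdom _

/-- `Ω` is incomputable: no algorithm outputs, given `n`, the `n`-th bit of the
binary expansion of `Ω`. -/
theorem stmt13 (U : Str →. Str) (hU : UnivPF U) :
    ¬ ∃ f : ℕ → Bool, Computable f ∧ ∀ n : ℕ, f n = nthBit (Omega U) n := by
  rintro ⟨f, hf, hbits⟩
  exact hU.not_computablePred_dom (computablePred_dom_of_computable_nthBit hU.1 hU.2.1 hf hbits)
end
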